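/- Let c > 0, let f be a meromorphic function on the open unit disk 𝔻 with f^♯(z) ≥ c for all z ∈ 𝔻 (i.e. f ∈ ℱ_c), and let z₀ ∈ 𝔻. Then f^♯(z₀) ≤ (1 + √(1 − 4c²(1 − |z₀|²)²))/(2c(1 − |z₀|²)²). -/

import Mathlib

open Complex Metric ComplexConjugate

open scoped Classical in
/-- The spherical derivative of a meromorphic function `f` on the unit disk:
`|f'(z)|/(1+|f(z)|^2)` where `f` is analytic, and `|(1/f)'(z)|/(1+|(1/f)(z)|^2)` at poles. -/
noncomputable def sphDeriv (f : ℂ → ℂ) (z : ℂ) : ℝ :=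
  if AnalyticAt ℂ f z then
    ‖deriv f z‖ / (1 + (‖f z‖) ^ 2)
  else
    ‖deriv (fun w => (f w)⁻¹) z‖ / (1 + (‖(f z)⁻¹‖) ^ 2)

/-- `f` is meromorphic on the open unit disk: at each point it is either analytic,
or has a pole, i.e. `1/f` is analytic there and vanishes there. -/
def MeroOnDisk (f : ℂ → ℂ) : Prop :=
  ∀ z ∈ ball (0 : ℂ) 1,
    AnalyticAt ℂ f z ∨ (AnalyticAt ℂ (fun w => (f w)⁻¹) z ∧ (f z)⁻¹ = 0)

/-- A meromorphic function on the unit disk is locally univalent: `f'(z) ≠ 0` at every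
point where `f` is analytic, and every pole is simple (`1/f` has a simple zero). -/
def LocUnivOnDisk (f : ℂ → ℂ) : Prop :=
  ∀ z ∈ ball (0 : ℂ) 1,
    (AnalyticAt ℂ f z → deriv f z ≠ 0) ∧
    (¬ AnalyticAt ℂ f z → deriv (fun w => (f w)⁻¹) z ≠ 0)

/-!
Where `f` is analytic at `z₀`, rotate the Riemann sphere by `g = (f - w₀)/(1 + w̄₀ f)`,
`w₀ = f z₀`, so that `g z₀ = 0` and `g♯ = f♯`. The functions `P = 1/g'` and `Q = g²/g'` are
analytic on the disk even at poles of `f` and `g`, and `|P| + |Q| = 1/f♯ ≤ 1/c` there.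
Since `Q` vanishes to second order at `z₀`, `R = Q/(z - z₀)²` is analytic as well, with
`|R z₀| = f♯(z₀)`, and the maximum principle applied to `P + λ (1 - z̄₀ z)² R` for a suitable
`|λ| = 1` gives `1/f♯(z₀) + (1 - |z₀|²)² f♯(z₀) ≤ 1/c`, a quadratic inequality for `f♯(z₀)`.
At a pole, apply this to `1/f`, which has the same spherical derivative.
-/

open Filter Topology Set Function

theorem norm_one_sub_conj_mul_sq (a z : ℂ) :
    ‖1 - conj a * z‖ ^ 2 = ‖z - a‖ ^ 2 + (1 - ‖a‖ ^ 2) * (1 - ‖z‖ ^ 2) := by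
  simp only [Complex.sq_norm, Complex.normSq_apply, Complex.sub_re, Complex.sub_im,
    Complex.mul_re, Complex.mul_im, Complex.conj_re, Complex.conj_im, Complex.one_re,
    Complex.one_im]
  ring

theorem analyticOnNhd_update_of_tendsto {U : Set ℂ} {g : ℂ → ℂ} {z₀ L : ℂ} (hU : IsOpen U)
    (hz₀ : z₀ ∈ U) (hg : DifferentiableOn ℂ g (U \ {z₀}))
    (hlim : Tendsto g (𝓝[≠] z₀) (𝓝 L)) : AnalyticOnNhd ℂ (update g z₀ L) U := by
  refine DifferentiableOn.analyticOnNhd ?_ hU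
  exact (Complex.differentiableOn_compl_singleton_and_continuousAt_iff (hU.mem_nhds hz₀)).mp
    ⟨hg.congr fun z hz => update_of_ne hz.2 _ _, continuousAt_update_same.mpr hlim⟩

theorem norm_le_of_eventually_sphere_norm_le {H : ℂ → ℂ} {K : ℝ → ℝ} {B : ℝ} {z : ℂ}
    (hH : DifferentiableOn ℂ H (ball 0 1)) (hz : z ∈ ball (0 : ℂ) 1)
    (hbound : ∀ᶠ r in 𝓝[<] 1, ∀ w ∈ sphere (0 : ℂ) r, ‖H w‖ ≤ K r)
    (hK : Tendsto K (𝓝[<] 1) (𝓝 B)) : ‖H z‖ ≤ B := by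
  refine ge_of_tendsto hK ?_
  filter_upwards [hbound, Ioo_mem_nhdsLT (mem_ball_zero_iff.mp hz)] with r hr ⟨hzr, hr1⟩
  have hr0 : r ≠ 0 := ((norm_nonneg z).trans_lt hzr).ne'
  refine Complex.norm_le_of_forall_mem_frontier_norm_le isBounded_ball
    (hH.diffContOnCl_ball (closedBall_subset_ball hr1)) ?_
    (subset_closure (mem_ball_zero_iff.mpr hzr))
  rwa [frontier_ball _ hr0]

theorem norm_add_sq_mul_norm_le {P R : ℂ → ℂ} {z₀ : ℂ} {B : ℝ}
    (hP : DifferentiableOn ℂ P (ball 0 1)) (hR : DifferentiableOn ℂ R (ball 0 1))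
    (hz₀ : z₀ ∈ ball (0 : ℂ) 1)
    (hbound : ∀ z ∈ ball (0 : ℂ) 1, z ≠ z₀ → ‖P z‖ + ‖z - z₀‖ ^ 2 * ‖R z‖ ≤ B) :
    ‖P z₀‖ + (1 - ‖z₀‖ ^ 2) ^ 2 * ‖R z₀‖ ≤ B := by
  obtain ⟨u, hu, hPu⟩ := Complex.exists_norm_eq_mul_self (P z₀)
  obtain ⟨v, hv, hRv⟩ := Complex.exists_norm_eq_mul_self (R z₀)
  set a := ‖z₀‖
  have ha : 0 ≤ a := norm_nonneg z₀
  have ha1 : a < 1 := mem_ball_zero_iff.mp hz₀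
  let H : ℂ → ℂ := fun z => u * P z + v * ((1 - conj z₀ * z) ^ 2 * R z)
  have hH : DifferentiableOn ℂ H (ball 0 1) := by
    have : DifferentiableOn ℂ (fun z : ℂ => (1 - conj z₀ * z) ^ 2) (ball 0 1) := by fun_prop
    exact (hP.const_mul u).add ((this.mul hR).const_mul v)
  have hHz₀ : ‖H z₀‖ = ‖P z₀‖ + (1 - a ^ 2) ^ 2 * ‖R z₀‖ := by
    have : H z₀ = ‖P z₀‖ + (1 - a ^ 2) ^ 2 * ‖R z₀‖ := by
      simp only [H, Complex.conj_mul', hPu, hRv]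
      ring
    rw [this]
    norm_cast
    exact Real.norm_of_nonneg (by positivity)
  rw [← hHz₀]
  -- On `‖z‖ = r` the weight `‖1 - z̄₀ z‖²` exceeds `‖z - z₀‖²` only by `(1 - a²)(1 - r²) → 0`.
  refine norm_le_of_eventually_sphere_norm_le hH hz₀
    (K := fun r => B + (1 - a ^ 2) * (1 - r ^ 2) * (B / (r - a) ^ 2)) ?_ ?_
  · filter_upwards [Ioo_mem_nhdsLT ha1] with r ⟨har, hr1⟩ z hz
    have hzr : ‖z‖ = r := mem_sphere_zero_iff_norm.mp hz
    have hdist : r - a ≤ ‖z - z₀‖ := hzr ▸ norm_sub_norm_le z z₀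
    have hz1 : z ∈ ball (0 : ℂ) 1 := mem_ball_zero_iff.mpr (hzr ▸ hr1)
    have hne : z ≠ z₀ := fun h => by simp [h] at hdist; linarith
    have hbz := hbound z hz1 hne
    have hRz : ‖R z‖ ≤ B / (r - a) ^ 2 := by
      rw [le_div_iff₀ (by nlinarith), mul_comm]
      nlinarith [norm_nonneg (P z), norm_nonneg (R z),
        pow_le_pow_left₀ (sub_nonneg.mpr har.le) hdist 2]
    calc ‖H z‖ ≤ ‖P z‖ + ‖1 - conj z₀ * z‖ ^ 2 * ‖R z‖ := by
          refine (norm_add_le _ _).trans_eq ?_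
          simp only [norm_mul, norm_pow, hu, hv, one_mul]
      _ = ‖P z‖ + ‖z - z₀‖ ^ 2 * ‖R z‖ + (1 - a ^ 2) * (1 - r ^ 2) * ‖R z‖ := by
          rw [norm_one_sub_conj_mul_sq, hzr]
          ring
      _ ≤ B + (1 - a ^ 2) * (1 - r ^ 2) * (B / (r - a) ^ 2) := by
          gcongr
          exact mul_nonneg (by nlinarith) (by nlinarith)
  · have hK : ContinuousAt (fun r : ℝ => B + (1 - a ^ 2) * (1 - r ^ 2) * (B / (r - a) ^ 2)) 1 :=
      continuousAt_const.add <|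
        (by fun_prop : ContinuousAt (fun r : ℝ => (1 - a ^ 2) * (1 - r ^ 2)) 1).mul <|
          continuousAt_const.div (by fun_prop) (pow_ne_zero 2 (sub_ne_zero.mpr ha1.ne'))
    simpa using hK.tendsto.mono_left nhdsWithin_le_nhds

theorem le_of_mul_one_add_sq_mul_sq_le {c d x : ℝ} (hc : 0 < c) (hd : 0 < d)
    (h : c * (1 + d ^ 2 * x ^ 2) ≤ x) :
    x ≤ (1 + √(1 - 4 * c ^ 2 * d ^ 2)) / (2 * c * d ^ 2) := by
  have hsq : (2 * c * d ^ 2 * x - 1) ^ 2 ≤ 1 - 4 * c ^ 2 * d ^ 2 := by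
    nlinarith [mul_le_mul_of_nonneg_left h (show (0 : ℝ) ≤ 4 * c * d ^ 2 by positivity)]
  rw [le_div_iff₀ (by positivity)]
  linarith [(le_abs_self _).trans (Real.abs_le_sqrt hsq)]

theorem tendsto_sq_sub_div_deriv_div_sq {f : ℂ → ℂ} {z₀ : ℂ} (hf : AnalyticAt ℂ f z₀)
    (hd : deriv f z₀ ≠ 0) :
    Tendsto (fun z => (f z - f z₀) ^ 2 / deriv f z / (z - z₀) ^ 2) (𝓝[≠] z₀)
      (𝓝 (deriv f z₀)) := by
  have hslope : Tendsto (slope f z₀) (𝓝[≠] z₀) (𝓝 (deriv f z₀)) :=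
    hasDerivAt_iff_tendsto_slope.mp hf.differentiableAt.hasDerivAt
  have hderiv : Tendsto (deriv f) (𝓝[≠] z₀) (𝓝 (deriv f z₀)) :=
    hf.deriv.continuousAt.tendsto.mono_left nhdsWithin_le_nhds
  have := (hslope.pow 2).div hderiv hd
  rw [sq, mul_div_cancel_right₀ _ hd] at this
  refine this.congr' (eventually_nhdsWithin_of_forall fun z _ => ?_)
  rw [Pi.div_apply, slope_def_field, div_pow, div_right_comm]

theorem LocUnivOnDisk.of_sphDeriv_pos {f : ℂ → ℂ}
    (h : ∀ z ∈ ball (0 : ℂ) 1, 0 < sphDeriv f z) : LocUnivOnDisk f := by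
  refine fun z hz => ⟨fun hA h0 => ?_, fun hA h0 => ?_⟩ <;>
    simpa [sphDeriv, hA, h0] using h z hz

theorem MeroOnDisk.inv {f : ℂ → ℂ} (hf : MeroOnDisk f) : MeroOnDisk fun w => (f w)⁻¹ := by
  intro z hz
  simp only [inv_inv]
  by_cases hg : AnalyticAt ℂ (fun w => (f w)⁻¹) z
  · exact Or.inl hg
  have hA : AnalyticAt ℂ f z := (hf z hz).resolve_right fun h => hg h.1
  exact Or.inr ⟨hA, not_not.mp fun h0 => hg (hA.inv h0)⟩

theorem AnalyticAt.ne_zero_of_analyticAt_inv {f : ℂ → ℂ} {z : ℂ} (hf : AnalyticAt ℂ f z)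
    (hd : deriv f z ≠ 0) (hg : AnalyticAt ℂ (fun w => (f w)⁻¹) z) : f z ≠ 0 := by
  intro h0
  have hne : ∀ᶠ w in 𝓝[≠] z, f w ≠ 0 := hf.differentiableAt.hasDerivAt.eventually_ne hd
  have h1 : Tendsto (fun w => f w * (f w)⁻¹) (𝓝[≠] z) (𝓝 1) :=
    tendsto_const_nhds.congr' (hne.mono fun w hw => (mul_inv_cancel₀ hw).symm)
  have h2 : Tendsto (fun w => f w * (f w)⁻¹) (𝓝[≠] z) (𝓝 (f z * (f z)⁻¹)) :=
    (hf.continuousAt.mul hg.continuousAt).tendsto.mono_left nhdsWithin_le_nhds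
  rw [h0, zero_mul] at h2
  exact one_ne_zero (tendsto_nhds_unique h1 h2)

theorem sphDeriv_inv {f : ℂ → ℂ} (hf : MeroOnDisk f) (hu : LocUnivOnDisk f) {z : ℂ}
    (hz : z ∈ ball (0 : ℂ) 1) : sphDeriv (fun w => (f w)⁻¹) z = sphDeriv f z := by
  by_cases hA : AnalyticAt ℂ f z
  · by_cases hg : AnalyticAt ℂ (fun w => (f w)⁻¹) z
    · have hf0 : f z ≠ 0 := hA.ne_zero_of_analyticAt_inv ((hu z hz).1 hA) hg
      rw [sphDeriv, if_pos hg, sphDeriv, if_pos hA, deriv_fun_inv'' hA.differentiableAt hf0,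
        norm_div, norm_neg, norm_pow, norm_inv]
      have : 0 < ‖f z‖ := norm_pos_iff.mpr hf0
      field_simp
      ring
    · simp only [sphDeriv, if_neg hg, if_pos hA, inv_inv]
  · simp only [sphDeriv, if_pos ((hf z hz).resolve_left hA).1, if_neg hA]

/-- With `κ = 1 + |w₀|²` and `g = (f - w₀)/(1 + w̄₀ f)`, `sqDivDeriv f 1 w̄₀ = κ/g'` and
`sqDivDeriv f (-w₀) 1 = κ g²/g'`. At a pole the same quotient is written through `1/f`,
which makes it analytic there. -/
noncomputable def sqDivDeriv (f : ℂ → ℂ) (a b : ℂ) (z : ℂ) : ℂ :=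
  open scoped Classical in
  if AnalyticAt ℂ f z then (a + b * f z) ^ 2 / deriv f z
  else -(b + a * (f z)⁻¹) ^ 2 / deriv (fun w => (f w)⁻¹) z

theorem sqDivDeriv_of_analyticAt {f : ℂ → ℂ} {z : ℂ} (hA : AnalyticAt ℂ f z) (a b : ℂ) :
    sqDivDeriv f a b z = (a + b * f z) ^ 2 / deriv f z := by
  rw [sqDivDeriv, if_pos hA]
theorem analyticOnNhd_sqDivDeriv {f : ℂ → ℂ} (hf : MeroOnDisk f) (hu : LocUnivOnDisk f)
    (a b : ℂ) : AnalyticOnNhd ℂ (sqDivDeriv f a b) (ball 0 1) := by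
  intro z hz
  by_cases hA : AnalyticAt ℂ f z
  · have hd := (hu z hz).1 hA
    have : AnalyticAt ℂ (fun w => (a + b * f w) ^ 2 / deriv f w) z := by
      fun_prop (disch := exact hd)
    refine this.congr ?_
    filter_upwards [hA.eventually_analyticAt] with w hw
    rw [sqDivDeriv_of_analyticAt hw]
  have hg := ((hf z hz).resolve_left hA).1
  have hgd := (hu z hz).2 hA
  have hne : ∀ᶠ w in 𝓝[≠] z, f w ≠ 0 := by
    simpa using hg.differentiableAt.hasDerivAt.eventually_ne (c := 0) hgd
  have : AnalyticAt ℂ (fun w => -(b + a * (f w)⁻¹) ^ 2 / deriv (fun w => (f w)⁻¹) w) z := by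
    fun_prop (disch := exact hgd)
  refine this.congr ?_
  filter_upwards [hg.eventually_analyticAt, eventually_nhdsWithin_iff.mp hne] with w hgw hw
  rcases eq_or_ne w z with rfl | hwz
  · rw [sqDivDeriv, if_neg hA]
  have hfw := hw hwz
  have hAw : AnalyticAt ℂ (fun v => ((f v)⁻¹)⁻¹) w := hgw.inv (inv_ne_zero hfw)
  simp only [inv_inv] at hAw
  rw [sqDivDeriv_of_analyticAt hAw, deriv_fun_inv'' hAw.differentiableAt hfw, div_div_eq_mul_div,
    neg_mul, neg_div_neg_eq, ← mul_pow, add_mul, mul_assoc, inv_mul_cancel₀ hfw]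
  ring

theorem norm_sqDivDeriv_add_norm_sqDivDeriv (f : ℂ → ℂ) (w₀ z : ℂ) :
    ‖sqDivDeriv f 1 (conj w₀) z‖ + ‖sqDivDeriv f (-w₀) 1 z‖ = (1 + ‖w₀‖ ^ 2) / sphDeriv f z := by
  have hrot (u : ℂ) :
      ‖1 + conj w₀ * u‖ ^ 2 + ‖-w₀ + 1 * u‖ ^ 2 = (1 + ‖w₀‖ ^ 2) * (1 + ‖u‖ ^ 2) := by
    simp only [Complex.sq_norm, Complex.normSq_apply, Complex.add_re, Complex.add_im,
      Complex.mul_re, Complex.mul_im, Complex.conj_re, Complex.conj_im, Complex.one_re,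
      Complex.one_im, Complex.neg_re, Complex.neg_im]
    ring
  have hrot_inv (v : ℂ) :
      ‖conj w₀ + 1 * v‖ ^ 2 + ‖1 + -w₀ * v‖ ^ 2 = (1 + ‖w₀‖ ^ 2) * (1 + ‖v‖ ^ 2) := by
    simp only [Complex.sq_norm, Complex.normSq_apply, Complex.add_re, Complex.add_im,
      Complex.mul_re, Complex.mul_im, Complex.conj_re, Complex.conj_im, Complex.one_re,
      Complex.one_im, Complex.neg_re, Complex.neg_im]
    ring
  unfold sqDivDeriv sphDeriv
  split_ifs
  · rw [norm_div, norm_div, norm_pow, norm_pow, ← add_div, hrot, div_div_eq_mul_div]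
  · rw [norm_div, norm_div, norm_neg, norm_neg, norm_pow, norm_pow, ← add_div, hrot_inv,
      div_div_eq_mul_div]

theorem sphDeriv_le_of_analyticAt {c : ℝ} (hc : 0 < c) {f : ℂ → ℂ} (hf : MeroOnDisk f)
    (hge : ∀ z ∈ ball (0 : ℂ) 1, c ≤ sphDeriv f z) {z₀ : ℂ} (hz₀ : z₀ ∈ ball (0 : ℂ) 1)
    (hA : AnalyticAt ℂ f z₀) :
    sphDeriv f z₀ ≤
      (1 + √(1 - 4 * c ^ 2 * (1 - ‖z₀‖ ^ 2) ^ 2)) / (2 * c * (1 - ‖z₀‖ ^ 2) ^ 2) := by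
  have hu : LocUnivOnDisk f := .of_sphDeriv_pos fun z hz => hc.trans_le (hge z hz)
  have hd : deriv f z₀ ≠ 0 := (hu z₀ hz₀).1 hA
  set w₀ := f z₀
  set κ : ℝ := 1 + ‖w₀‖ ^ 2
  have hQ := analyticOnNhd_sqDivDeriv hf hu (-w₀) 1
  have hlim : Tendsto (fun z => sqDivDeriv f (-w₀) 1 z / (z - z₀) ^ 2) (𝓝[≠] z₀)
      (𝓝 (deriv f z₀)) := by
    refine (tendsto_sq_sub_div_deriv_div_sq hA hd).congr' ?_
    filter_upwards [nhdsWithin_le_nhds hA.eventually_analyticAt] with z hz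
    rw [sqDivDeriv_of_analyticAt hz, neg_add_eq_sub, one_mul]
  have hdiff : DifferentiableOn ℂ (fun z => sqDivDeriv f (-w₀) 1 z / (z - z₀) ^ 2)
      (ball 0 1 \ {z₀}) := fun z hz =>
    ((hQ z hz.1).differentiableAt.div ((differentiableAt_id.sub_const z₀).pow 2)
      (pow_ne_zero 2 (sub_ne_zero.mpr hz.2))).differentiableWithinAt
  have hR := analyticOnNhd_update_of_tendsto isOpen_ball hz₀ hdiff hlim
  have hmax := norm_add_sq_mul_norm_le (B := κ / c)
    (analyticOnNhd_sqDivDeriv hf hu 1 (conj w₀)).differentiableOn hR.differentiableOn hz₀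
    fun z hz hne => by
      have : ‖z - z₀‖ ^ 2 ≠ 0 := by simpa [sub_eq_zero] using hne
      rw [update_of_ne hne, norm_div, norm_pow, mul_div_cancel₀ _ this,
        norm_sqDivDeriv_add_norm_sqDivDeriv]
      exact div_le_div_of_nonneg_left (by positivity) hc (hge z hz)
  have hD : 0 < ‖deriv f z₀‖ := norm_pos_iff.mpr hd
  have hP : ‖(1 + conj w₀ * w₀) ^ 2 / deriv f z₀‖ = κ ^ 2 / ‖deriv f z₀‖ := by
    rw [Complex.conj_mul', norm_div, norm_pow]
    norm_cast
    rw [Real.norm_of_nonneg (by positivity)]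
  rw [update_self, sqDivDeriv_of_analyticAt hA, hP] at hmax
  have hz₀' : ‖z₀‖ < 1 := mem_ball_zero_iff.mp hz₀
  refine le_of_mul_one_add_sq_mul_sq_le hc (by nlinarith [norm_nonneg z₀]) ?_
  rw [sphDeriv, if_pos hA]
  field_simp at hmax ⊢
  linarith

/-- Upper bound for the spherical derivative of `f ∈ ℱ_c` at any point of the disk. -/
theorem sphDeriv_upper (c : ℝ) (hc : 0 < c) (f : ℂ → ℂ) (hf : MeroOnDisk f)
    (hge : ∀ z ∈ ball (0 : ℂ) 1, c ≤ sphDeriv f z) (z₀ : ℂ) (hz₀ : z₀ ∈ ball (0 : ℂ) 1) :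
    sphDeriv f z₀ ≤
      (1 + Real.sqrt (1 - 4 * c ^ 2 * (1 - ‖z₀‖ ^ 2) ^ 2)) /
        (2 * c * (1 - ‖z₀‖ ^ 2) ^ 2) := by
  by_cases hA : AnalyticAt ℂ f z₀
  · exact sphDeriv_le_of_analyticAt hc hf hge hz₀ hA
  have hu : LocUnivOnDisk f := .of_sphDeriv_pos fun z hz => hc.trans_le (hge z hz)
  rw [← sphDeriv_inv hf hu hz₀]
  have hge' (z) (hz : z ∈ ball (0 : ℂ) 1) : c ≤ sphDeriv (fun w => (f w)⁻¹) z :=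
    (hge z hz).trans_eq (sphDeriv_inv hf hu hz).symm
  exact sphDeriv_le_of_analyticAt hc hf.inv hge' hz₀ ((hf z₀ hz₀).resolve_left hA).1
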